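/- Let p ≥ 0 and q ≥ 1 be integers and z_{-q},…,z_{-1},z_0,z_1,…,z_p ∈ ℂ with Re(z_k) ≥ 1 for all −q ≤ k ≤ p, Re(z_p) > 1 and Re(z_{-q}) > 1. Then ζ_{(p+1,1^q)}(z) = ζ*(z_0, z_1, …, z_p) · ζ(z_{−1}, z_{−2}, …, z_{−q}) − S, where S is the Schur multiple zeta-function of hook shape (p+2, 1^{q−1}) given explicitly by S = Σ m_{-1}^{-z_{-1}} (∏_{i=0}^{p} m_i^{-z_i}) (∏_{j=2}^{q} n_j^{-z_{-j}}), the sum over positive integers m_{-1} ≤ m_0 ≤ m_1 ≤ ⋯ ≤ m_p and m_{-1} < n_2 < n_3 < ⋯ < n_q. -/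

import Mathlib

/-- The Euler–Zagier multiple zeta-function
`ζ(s₁,…,s_r) = Σ_{0<m₁<⋯<m_r} m₁^{-s₁}⋯m_r^{-s_r}` (equal to `1` when `r = 0`). -/
noncomputable def mzeta {r : ℕ} (s : Fin r → ℂ) : ℂ :=
  ∑' m : {m : Fin r → ℕ+ // StrictMono m}, ∏ i, ((m.1 i : ℕ) : ℂ) ^ (-(s i))

/-- The star-variant
`ζ*(s₁,…,s_r) = Σ_{0<m₁≤⋯≤m_r} m₁^{-s₁}⋯m_r^{-s_r}` (equal to `1` when `r = 0`). -/
noncomputable def mzetaStar {r : ℕ} (s : Fin r → ℂ) : ℂ :=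
  ∑' m : {m : Fin r → ℕ+ // Monotone m}, ∏ i, ((m.1 i : ℕ) : ℂ) ^ (-(s i))

/-- The Schur multiple zeta-function of hook shape `(p+1, 1^q)` with
content-parametrized variables `z` : the row carries entries
`m₀ ≤ m₁ ≤ ⋯ ≤ m_p` with variables `z_0, z_1, …, z_p`, and the column carries
entries `m₀ < n₁ < ⋯ < n_q` with variables `z_{-1}, …, z_{-q}`.
The column chain (including the corner `m₀`) is encoded as a strictly monotone
tuple `mc.2 : Fin (q+1) → ℕ+` with `mc.2 0 = mc.1 0 = m₀`. -/
noncomputable def hookZeta (p q : ℕ) (z : ℤ → ℂ) : ℂ :=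
  ∑' x : {mc : (Fin (p + 1) → ℕ+) × (Fin (q + 1) → ℕ+) //
      Monotone mc.1 ∧ StrictMono mc.2 ∧ mc.1 0 = mc.2 0},
    (∏ i : Fin (p + 1), ((x.1.1 i : ℕ) : ℂ) ^ (-(z ((i : ℕ) : ℤ)))) *
    (∏ j : Fin q, ((x.1.2 j.succ : ℕ) : ℂ) ^ (-(z (-((j : ℕ) + 1 : ℤ)))))

open Finset

/-! Auxiliary summability lemmas -/

lemma summable_pi_rpow (r : ℕ) (c : ℝ) (hc : c < -1) :
    Summable (fun m : Fin r → ℕ+ => ∏ i, ((m i : ℕ) : ℝ) ^ c) := by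
  induction r with
  | zero => simpa using summable_of_finite_support (Set.toFinite _)
  | succ r ih =>
    have h0 : Summable (fun n : ℕ+ => ((n : ℕ) : ℝ) ^ c) :=
      (Real.summable_nat_rpow.2 hc).comp_injective PNat.coe_injective
    rw [← (Fin.consEquiv (fun _ : Fin (r + 1) => ℕ+)).summable_iff]
    have key : ((fun m : Fin (r + 1) → ℕ+ => ∏ i, ((m i : ℕ) : ℝ) ^ c) ∘
        (Fin.consEquiv (fun _ : Fin (r + 1) => ℕ+))) =
        (fun x : ℕ+ × (Fin r → ℕ+) =>
        (((x.1 : ℕ) : ℝ) ^ c) * ∏ i, ((x.2 i : ℕ) : ℝ) ^ c) := by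
      funext x
      simp only [Function.comp_apply, Fin.consEquiv_apply, Fin.prod_univ_succ,
        Fin.cons_zero, Fin.cons_succ]
    rw [key]
    exact Summable.mul_of_nonneg (f := fun n : ℕ+ => ((n : ℕ) : ℝ) ^ c)
      (g := fun m : Fin r → ℕ+ => ∏ i, ((m i : ℕ) : ℝ) ^ c) h0 ih
      (fun n => Real.rpow_nonneg (Nat.cast_nonneg _) c)
      (fun m => Finset.prod_nonneg fun i _ => Real.rpow_nonneg (Nat.cast_nonneg _) c)

lemma prod_rpow_le {r : ℕ} (σ : Fin (r + 1) → ℝ) (h1 : ∀ i, 1 ≤ σ i)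
    (hl : 1 < σ (Fin.last r)) {ε : ℝ} (hε : ε = (σ (Fin.last r) - 1) / (r + 1))
    (m : Fin (r + 1) → ℕ+) (hm : Monotone m) :
    ∏ i, ((m i : ℕ) : ℝ) ^ (-σ i) ≤ ∏ i, ((m i : ℕ) : ℝ) ^ (-(1 + ε)) := by
  have hεpos : 0 < ε := hε ▸ div_pos (by linarith) (by positivity)
  set f : Fin (r + 1) → ℝ := fun i => ((m i : ℕ) : ℝ) with hf
  have hf1 : ∀ i, 1 ≤ f i := fun i => by
    simp only [hf]; exact_mod_cast (m i).one_le
  have hfpos : ∀ i, 0 < f i := fun i => lt_of_lt_of_le one_pos (hf1 i)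
  have key : ∏ i, f i ^ (1 + ε) ≤ ∏ i, f i ^ σ i := by
    have step1 : ∏ i, f i ^ (1 + ε) = (∏ i, f i) * ∏ i, f i ^ ε := by
      rw [← Finset.prod_mul_distrib]
      exact Finset.prod_congr rfl fun i _ => by
        rw [Real.rpow_add (hfpos i), Real.rpow_one]
    have step2 : ∏ i, f i ^ ε ≤ f (Fin.last r) ^ (σ (Fin.last r) - 1) := by
      have : ∏ i, f i ^ ε ≤ ∏ _i : Fin (r + 1), f (Fin.last r) ^ ε :=
        Finset.prod_le_prod (fun i _ => Real.rpow_nonneg (hfpos i).le ε)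
          (fun i _ => Real.rpow_le_rpow (hfpos i).le
            (by simp only [hf]; exact_mod_cast hm (Fin.le_last i)) hεpos.le)
      refine this.trans_eq ?_
      rw [Finset.prod_const, ← Real.rpow_natCast (f (Fin.last r) ^ ε),
        ← Real.rpow_mul (hfpos _).le]
      congr 1
      rw [hε]
      have : ((r : ℝ) + 1) ≠ 0 := by positivity
      field_simp
      simp [Finset.card_univ]
    have step3 : (∏ i, f i) * f (Fin.last r) ^ (σ (Fin.last r) - 1) ≤ ∏ i, f i ^ σ i := by
      rw [Fin.prod_univ_castSucc (f := f), Fin.prod_univ_castSucc (f := fun i => f i ^ σ i)]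
      have hlast : f (Fin.last r) * f (Fin.last r) ^ (σ (Fin.last r) - 1)
          = f (Fin.last r) ^ σ (Fin.last r) := by
        nth_rewrite 1 [← Real.rpow_one (f (Fin.last r))]
        rw [← Real.rpow_add (hfpos _)]
        ring_nf
      calc (∏ i : Fin r, f i.castSucc) * f (Fin.last r) * f (Fin.last r) ^ (σ (Fin.last r) - 1)
          = (∏ i : Fin r, f i.castSucc) * (f (Fin.last r) ^ σ (Fin.last r)) := by
            rw [mul_assoc, hlast]
        _ ≤ (∏ i : Fin r, f i.castSucc ^ σ i.castSucc) * (f (Fin.last r) ^ σ (Fin.last r)) := by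
            refine mul_le_mul_of_nonneg_right ?_ (Real.rpow_nonneg (hfpos _).le _)
            refine Finset.prod_le_prod (fun i _ => (hfpos _).le) (fun i _ => ?_)
            nth_rewrite 1 [← Real.rpow_one (f i.castSucc)]
            exact Real.rpow_le_rpow_of_exponent_le (hf1 _) (h1 _)
    calc ∏ i, f i ^ (1 + ε) = (∏ i, f i) * ∏ i, f i ^ ε := step1
      _ ≤ (∏ i, f i) * f (Fin.last r) ^ (σ (Fin.last r) - 1) := by
          refine mul_le_mul_of_nonneg_left step2 ?_
          exact Finset.prod_nonneg fun i _ => (hfpos i).le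
      _ ≤ ∏ i, f i ^ σ i := step3
  have e1 : ∏ i, f i ^ (-σ i) = (∏ i, f i ^ σ i)⁻¹ := by
    rw [← Finset.prod_inv_distrib]
    exact Finset.prod_congr rfl fun i _ => (Real.rpow_neg (hfpos i).le _)
  have e2 : ∏ i, f i ^ (-(1 + ε)) = (∏ i, f i ^ (1 + ε))⁻¹ := by
    rw [← Finset.prod_inv_distrib]
    exact Finset.prod_congr rfl fun i _ => (Real.rpow_neg (hfpos i).le _)
  rw [e1, e2]
  exact inv_anti₀ (Finset.prod_pos fun i _ => Real.rpow_pos_of_pos (hfpos i) _) key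

lemma summable_mono_rpow {r : ℕ} (σ : Fin (r + 1) → ℝ) (h1 : ∀ i, 1 ≤ σ i)
    (hl : 1 < σ (Fin.last r)) :
    Summable (fun m : {m : Fin (r + 1) → ℕ+ // Monotone m} =>
      ∏ i, ((m.1 i : ℕ) : ℝ) ^ (-σ i)) := by
  set ε := (σ (Fin.last r) - 1) / (r + 1) with hε
  have hεpos : 0 < ε := div_pos (by linarith) (by positivity)
  have hbig : Summable (fun m : {m : Fin (r + 1) → ℕ+ // Monotone m} =>
      ∏ i, ((m.1 i : ℕ) : ℝ) ^ (-(1 + ε))) :=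
    (summable_pi_rpow (r + 1) (-(1 + ε)) (by linarith)).comp_injective Subtype.val_injective
  refine Summable.of_nonneg_of_le
    (fun m => Finset.prod_nonneg fun i _ => Real.rpow_nonneg (Nat.cast_nonneg _) _)
    (fun m => prod_rpow_le σ h1 hl hε m.1 m.2) hbig

lemma norm_prod_cpow {r : ℕ} (w : Fin r → ℂ) (m : Fin r → ℕ+) :
    ‖∏ i, ((m i : ℕ) : ℂ) ^ (-(w i))‖ = ∏ i, ((m i : ℕ) : ℝ) ^ (-(w i).re) := by
  rw [norm_prod]
  refine Finset.prod_congr rfl fun i _ => ?_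
  rw [Complex.norm_natCast_cpow_of_pos (m i).pos, Complex.neg_re]

/-! Cons lemmas -/

lemma strictMono_cons {n : ℕ} {a : ℕ+} {f : Fin (n + 1) → ℕ+} (hf : StrictMono f)
    (ha : a < f 0) : StrictMono (Fin.cons a f : Fin (n + 2) → ℕ+) := by
  rw [Fin.strictMono_iff_lt_succ]
  intro i
  induction i using Fin.cases with
  | zero => simpa using ha
  | succ j =>
    rw [← Fin.succ_castSucc]
    simpa only [Fin.cons_succ] using hf (Fin.castSucc_lt_succ (i := j))

lemma monotone_cons {n : ℕ} {a : ℕ+} {f : Fin (n + 1) → ℕ+} (hf : Monotone f)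
    (ha : a ≤ f 0) : Monotone (Fin.cons a f : Fin (n + 2) → ℕ+) := by
  rw [Fin.monotone_iff_le_succ]
  intro i
  induction i using Fin.cases with
  | zero => simpa using ha
  | succ j =>
    rw [← Fin.succ_castSucc]
    simpa only [Fin.cons_succ] using hf (Fin.castSucc_le_succ j)

def hookEquivA (P Q : ℕ) :
    {mc : (Fin (P + 1) → ℕ+) × (Fin (Q + 1 + 1) → ℕ+) //
      Monotone mc.1 ∧ StrictMono mc.2 ∧ mc.1 0 = mc.2 0} ≃
    {x : {m : Fin (P + 1) → ℕ+ // Monotone m} × {n : Fin (Q + 1) → ℕ+ // StrictMono n} //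
      x.1.1 0 < x.2.1 0} where
  toFun mc := ⟨(⟨mc.1.1, mc.2.1⟩, ⟨fun j => mc.1.2 j.succ, mc.2.2.1.comp Fin.strictMono_succ⟩),
    by
      show mc.1.1 0 < mc.1.2 (Fin.succ 0)
      rw [mc.2.2.2]
      exact mc.2.2.1 (Fin.succ_pos 0)⟩
  invFun x := ⟨(x.1.1.1, Fin.cons (x.1.1.1 0) x.1.2.1),
    x.1.1.2, strictMono_cons x.1.2.2 x.2, by simp⟩
  left_inv mc := by
    refine Subtype.ext (Prod.ext rfl ?_)
    show Fin.cons (mc.1.1 0) (Fin.tail mc.1.2) = mc.1.2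
    rw [mc.2.2.2]
    exact Fin.cons_self_tail mc.1.2
  right_inv x := by
    refine Subtype.ext (Prod.ext (Subtype.ext rfl) (Subtype.ext ?_))
    funext j
    simp

def hookEquivB (P Q : ℕ) :
    {mc : (Fin (P + 1 + 1) → ℕ+) × (Fin (Q + 1) → ℕ+) //
      Monotone mc.1 ∧ StrictMono mc.2 ∧ mc.1 0 = mc.2 0} ≃
    {x : {m : Fin (P + 1) → ℕ+ // Monotone m} × {n : Fin (Q + 1) → ℕ+ // StrictMono n} //
      ¬ x.1.1 0 < x.2.1 0} where
  toFun mc := ⟨(⟨fun i => mc.1.1 i.succ, mc.2.1.comp Fin.strictMono_succ.monotone⟩,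
    ⟨mc.1.2, mc.2.2.1⟩), by
      show ¬ mc.1.1 (Fin.succ 0) < mc.1.2 0
      rw [not_lt, ← mc.2.2.2]
      exact mc.2.1 (Fin.zero_le _)⟩
  invFun x := ⟨(Fin.cons (x.1.2.1 0) x.1.1.1, x.1.2.1),
    monotone_cons x.1.1.2 (not_lt.mp x.2), x.1.2.2, by simp⟩
  left_inv mc := by
    refine Subtype.ext (Prod.ext ?_ rfl)
    show Fin.cons (mc.1.2 0) (Fin.tail mc.1.1) = mc.1.1
    rw [← mc.2.2.2]
    exact Fin.cons_self_tail mc.1.1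
  right_inv x := by
    refine Subtype.ext (Prod.ext (Subtype.ext ?_) (Subtype.ext rfl))
    funext i
    simp

/-- The first step of the induction in Theorem 3.3 of Matsumoto–Nakasuji: for `q ≥ 1`,
`ζ_{(p+1,1^q)}(z) = ζ*(z_0,…,z_p) ζ(z_{−1},…,z_{−q}) − S`,
where `S` is the Schur multiple zeta-function of hook shape `(p+2, 1^{q−1})`
whose row variables are `z_{−1}, z_0, …, z_p` and whose column variables are
`z_{−2}, …, z_{−q}`; this is `hookZeta (p+1) (q-1)` applied to the shifted
content parameters `k ↦ z (k − 1)`. -/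
theorem hook_zeta_first_step (p q : ℕ) (hq : 1 ≤ q) (z : ℤ → ℂ)
    (h1 : ∀ k : ℤ, -(q : ℤ) ≤ k → k ≤ (p : ℤ) → 1 ≤ (z k).re)
    (h2 : 1 < (z ((p : ℕ) : ℤ)).re) (h3 : 1 < (z (-(q : ℤ))).re) :
    hookZeta p q z =
      mzetaStar (fun a : Fin (p + 1) => z ((a : ℕ) : ℤ)) *
        mzeta (fun a : Fin q => z (-1 - ((a : ℕ) : ℤ))) -
      hookZeta (p + 1) (q - 1) (fun k => z (k - 1)) := by
  obtain ⟨q', rfl⟩ : ∃ q', q = q' + 1 := ⟨q - 1, (Nat.succ_pred_eq_of_pos hq).symm⟩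
  -- summability of the row norms
  have hsummF : Summable (fun m : {m : Fin (p + 1) → ℕ+ // Monotone m} =>
      ‖∏ i, ((m.1 i : ℕ) : ℂ) ^ (-(z ((i : ℕ) : ℤ)))‖) := by
    have hreal := summable_mono_rpow (fun i : Fin (p + 1) => (z ((i : ℕ) : ℤ)).re)
      (fun i => h1 _ (by omega) (by have := i.isLt; omega))
      (by simpa using h2)
    exact hreal.congr fun m => (norm_prod_cpow _ m.1).symm
  -- summability of the column norms
  have hsummG : Summable (fun n : {n : Fin (q' + 1) → ℕ+ // StrictMono n} =>
      ‖∏ j, ((n.1 j : ℕ) : ℂ) ^ (-(z (-1 - ((j : ℕ) : ℤ))))‖) := by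
    have hreal := summable_mono_rpow (fun j : Fin (q' + 1) => (z (-1 - ((j : ℕ) : ℤ))).re)
      (fun j => h1 _ (by have := j.isLt; omega) (by omega))
      (by
        have harg : (-1 - ((Fin.last q' : ℕ) : ℤ)) = -((q' + 1 : ℕ) : ℤ) := by
          push_cast [Fin.val_last]; ring
        rw [harg]; exact h3)
    have hmono := hreal.comp_injective
      (i := fun n : {n : Fin (q' + 1) → ℕ+ // StrictMono n} => (⟨n.1, n.2.monotone⟩ :
        {n : Fin (q' + 1) → ℕ+ // Monotone n}))
      (fun a b h => Subtype.ext (by simpa [Subtype.ext_iff] using h))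
    exact hmono.congr fun n => (norm_prod_cpow _ n.1).symm
  -- summability of the product family over pairs
  have hH : Summable (fun x : {m : Fin (p + 1) → ℕ+ // Monotone m} ×
      {n : Fin (q' + 1) → ℕ+ // StrictMono n} =>
      (∏ i, ((x.1.1 i : ℕ) : ℂ) ^ (-(z ((i : ℕ) : ℤ)))) *
      (∏ j, ((x.2.1 j : ℕ) : ℂ) ^ (-(z (-1 - ((j : ℕ) : ℤ)))))) :=
    summable_mul_of_summable_norm
      (f := fun m : {m : Fin (p + 1) → ℕ+ // Monotone m} =>
        ∏ i, ((m.1 i : ℕ) : ℂ) ^ (-(z ((i : ℕ) : ℤ))))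
      (g := fun n : {n : Fin (q' + 1) → ℕ+ // StrictMono n} =>
        ∏ j, ((n.1 j : ℕ) : ℂ) ^ (-(z (-1 - ((j : ℕ) : ℤ))))) hsummF hsummG
  have hprod : mzetaStar (fun a : Fin (p + 1) => z ((a : ℕ) : ℤ)) *
      mzeta (fun a : Fin (q' + 1) => z (-1 - ((a : ℕ) : ℤ))) =
      ∑' x : {m : Fin (p + 1) → ℕ+ // Monotone m} ×
        {n : Fin (q' + 1) → ℕ+ // StrictMono n},
        (∏ i, ((x.1.1 i : ℕ) : ℂ) ^ (-(z ((i : ℕ) : ℤ)))) *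
        (∏ j, ((x.2.1 j : ℕ) : ℂ) ^ (-(z (-1 - ((j : ℕ) : ℤ))))) := by
    rw [mzetaStar, mzeta]
    exact tsum_mul_tsum_of_summable_norm
      (f := fun m : {m : Fin (p + 1) → ℕ+ // Monotone m} =>
        ∏ i, ((m.1 i : ℕ) : ℂ) ^ (-(z ((i : ℕ) : ℤ))))
      (g := fun n : {n : Fin (q' + 1) → ℕ+ // StrictMono n} =>
        ∏ j, ((n.1 j : ℕ) : ℂ) ^ (-(z (-1 - ((j : ℕ) : ℤ))))) hsummF hsummG
  have hsplit := hH.tsum_subtype_add_tsum_subtype_compl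
    {x : {m : Fin (p + 1) → ℕ+ // Monotone m} ×
      {n : Fin (q' + 1) → ℕ+ // StrictMono n} | x.1.1 0 < x.2.1 0}
  have hA : hookZeta p (q' + 1) z =
      ∑' x : {x : {m : Fin (p + 1) → ℕ+ // Monotone m} ×
        {n : Fin (q' + 1) → ℕ+ // StrictMono n} // x.1.1 0 < x.2.1 0},
        (∏ i, ((x.1.1.1 i : ℕ) : ℂ) ^ (-(z ((i : ℕ) : ℤ)))) *
        (∏ j, ((x.1.2.1 j : ℕ) : ℂ) ^ (-(z (-1 - ((j : ℕ) : ℤ))))) := by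
    rw [hookZeta, ← Equiv.tsum_eq (hookEquivA p q')]
    refine tsum_congr fun mc => ?_
    show (∏ i, ((mc.1.1 i : ℕ) : ℂ) ^ (-(z ((i : ℕ) : ℤ)))) *
        (∏ j : Fin (q' + 1), ((mc.1.2 j.succ : ℕ) : ℂ) ^ (-(z (-((j : ℕ) + 1 : ℤ))))) =
      (∏ i, ((mc.1.1 i : ℕ) : ℂ) ^ (-(z ((i : ℕ) : ℤ)))) *
        (∏ j : Fin (q' + 1), ((mc.1.2 j.succ : ℕ) : ℂ) ^ (-(z (-1 - ((j : ℕ) : ℤ)))))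
    congr 1
    refine Finset.prod_congr rfl fun j _ => ?_
    rw [show -(((j : ℕ) : ℤ) + 1) = -1 - ((j : ℕ) : ℤ) from by ring]
  have hB : hookZeta (p + 1) (q' + 1 - 1) (fun k => z (k - 1)) =
      ∑' x : {x : {m : Fin (p + 1) → ℕ+ // Monotone m} ×
        {n : Fin (q' + 1) → ℕ+ // StrictMono n} // ¬ x.1.1 0 < x.2.1 0},
        (∏ i, ((x.1.1.1 i : ℕ) : ℂ) ^ (-(z ((i : ℕ) : ℤ)))) *
        (∏ j, ((x.1.2.1 j : ℕ) : ℂ) ^ (-(z (-1 - ((j : ℕ) : ℤ))))) := by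
    simp only [Nat.add_sub_cancel]
    rw [hookZeta, ← Equiv.tsum_eq (hookEquivB p q')]
    refine tsum_congr fun mc => ?_
    show (∏ i : Fin (p + 1 + 1), ((mc.1.1 i : ℕ) : ℂ) ^ (-(z (((i : ℕ) : ℤ) - 1)))) *
        (∏ j : Fin q', ((mc.1.2 j.succ : ℕ) : ℂ) ^ (-(z (-((j : ℕ) + 1 : ℤ) - 1)))) =
      (∏ i : Fin (p + 1), ((mc.1.1 i.succ : ℕ) : ℂ) ^ (-(z ((i : ℕ) : ℤ)))) *
        (∏ j : Fin (q' + 1), ((mc.1.2 j : ℕ) : ℂ) ^ (-(z (-1 - ((j : ℕ) : ℤ)))))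
    have hrow : ∏ i : Fin (p + 1 + 1), ((mc.1.1 i : ℕ) : ℂ) ^ (-(z (((i : ℕ) : ℤ) - 1))) =
        ((mc.1.1 0 : ℕ) : ℂ) ^ (-(z (-1))) *
          ∏ i : Fin (p + 1), ((mc.1.1 i.succ : ℕ) : ℂ) ^ (-(z ((i : ℕ) : ℤ))) := by
      rw [Fin.prod_univ_succ]
      exact congrArg₂ (· * ·)
        (congrArg (fun t => ((mc.1.1 0 : ℕ) : ℂ) ^ (-(z t))) (by simp))
        (Finset.prod_congr rfl fun i _ =>
          congrArg (fun t => ((mc.1.1 i.succ : ℕ) : ℂ) ^ (-(z t)))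
            (by push_cast [Fin.val_succ]; ring))
    have hcol : ∏ j : Fin (q' + 1), ((mc.1.2 j : ℕ) : ℂ) ^ (-(z (-1 - ((j : ℕ) : ℤ)))) =
        ((mc.1.2 0 : ℕ) : ℂ) ^ (-(z (-1))) *
          ∏ j : Fin q', ((mc.1.2 j.succ : ℕ) : ℂ) ^ (-(z (-(((j : ℕ) : ℤ) + 1) - 1))) := by
      rw [Fin.prod_univ_succ]
      exact congrArg₂ (· * ·)
        (congrArg (fun t => ((mc.1.2 0 : ℕ) : ℂ) ^ (-(z t))) (by simp))
        (Finset.prod_congr rfl fun j _ =>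
          congrArg (fun t => ((mc.1.2 j.succ : ℕ) : ℂ) ^ (-(z t)))
            (by push_cast [Fin.val_succ]; ring))
    rw [hrow, hcol, mc.2.2.2]
    ring
  refine eq_sub_of_add_eq ?_
  rw [hA, hB, hprod]
  exact hsplit
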